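/- Suppose A is a real square matrix, P is symmetric positive definite, Q is symmetric positive definite, and A P + P A^T + Q ⪯ 0. Then every eigenvalue of A has negative real part (A is Hurwitz). -/

import Mathlib

open Matrix

private lemma quad_re_eq {n : ℕ} (M : Matrix (Fin n) (Fin n) ℝ) (v : Fin n → ℂ) :
    (star v ⬝ᵥ ((M.map (algebraMap ℝ ℂ)) *ᵥ v)).re
      = (fun i => (v i).re) ⬝ᵥ (M *ᵥ fun i => (v i).re)
        + (fun i => (v i).im) ⬝ᵥ (M *ᵥ fun i => (v i).im) := by
  simp only [dotProduct, mulVec, Pi.star_apply, Matrix.map_apply, Finset.mul_sum,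
    Complex.re_sum, Finset.sum_add_distrib.symm]
  refine Finset.sum_congr rfl fun i _ => Finset.sum_congr rfl fun j _ => ?_
  simp [Complex.mul_re, RCLike.star_def]

private lemma quad_re_pos {n : ℕ} {M : Matrix (Fin n) (Fin n) ℝ} (hM : M.PosDef)
    {v : Fin n → ℂ} (hv : v ≠ 0) :
    0 < (star v ⬝ᵥ ((M.map (algebraMap ℝ ℂ)) *ᵥ v)).re := by
  rw [quad_re_eq]
  have hxy : (fun i => (v i).re) ≠ 0 ∨ (fun i => (v i).im) ≠ 0 := by
    by_contra hc
    push_neg at hc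
    apply hv
    funext i
    have h1 := congrFun hc.1 i
    have h2 := congrFun hc.2 i
    exact Complex.ext h1 h2
  rcases hxy with hx | hx
  · have h1 := hM.dotProduct_mulVec_pos hx
    have h2 := hM.posSemidef.dotProduct_mulVec_nonneg (fun i => (v i).im)
    simp only [star_trivial] at h1 h2
    linarith
  · have h1 := hM.dotProduct_mulVec_pos hx
    have h2 := hM.posSemidef.dotProduct_mulVec_nonneg (fun i => (v i).re)
    simp only [star_trivial] at h1 h2
    linarith

/-- Lyapunov stability: if `P ≻ 0`, `Q ≻ 0` and `A P + P Aᵀ + Q ⪯ 0`, then every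
(complex) eigenvalue of `A` has negative real part, i.e. `A` is Hurwitz. -/
theorem hurwitz_of_lyapunov {n : ℕ}
    (A P Q : Matrix (Fin n) (Fin n) ℝ)
    (hP : P.PosDef) (hQ : Q.PosDef)
    (h : (-(A * P + P * Aᵀ + Q)).PosSemidef) :
    ∀ μ : ℂ, μ ∈ spectrum ℂ (A.map (algebraMap ℝ ℂ)) → μ.re < 0 := by
  intro μ hμ
  set B := A.map (algebraMap ℝ ℂ) with hB
  -- obtain an eigenvector of `Aᵀ` with eigenvalue `conj μ`
  rw [spectrum.mem_iff] at hμ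
  have hdet : ((algebraMap ℂ (Matrix (Fin n) (Fin n) ℂ)) μ - B).det = 0 := by
    by_contra hd
    exact hμ ((Matrix.isUnit_iff_isUnit_det _).2 (Ne.isUnit hd))
  have hNeq : (starRingEnd ℂ μ) • (1 : Matrix (Fin n) (Fin n) ℂ) - Aᵀ.map (algebraMap ℝ ℂ)
      = (((algebraMap ℂ (Matrix (Fin n) (Fin n) ℂ)) μ - B).map (starRingEnd ℂ))ᵀ := by
    ext i j
    by_cases hij : i = j <;>
      simp [hB, Matrix.algebraMap_matrix_apply, Matrix.one_apply, hij, Ne.symm]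
  have hdetN : ((starRingEnd ℂ μ) • (1 : Matrix (Fin n) (Fin n) ℂ)
      - Aᵀ.map (algebraMap ℝ ℂ)).det = 0 := by
    rw [hNeq, Matrix.det_transpose, ← RingHom.mapMatrix_apply, ← RingHom.map_det, hdet, map_zero]
  obtain ⟨v, hv0, hv⟩ := (Matrix.exists_mulVec_eq_zero_iff).2 hdetN
  rw [Matrix.sub_mulVec, smul_mulVec, one_mulVec, sub_eq_zero] at hv
  have hv' : (Aᵀ.map (algebraMap ℝ ℂ)) *ᵥ v = (starRingEnd ℂ μ) • v := hv.symm
  -- left eigenvector relation : star v ᵥ* B = μ • star v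
  have hconj : star v ᵥ* B = μ • star v := by
    have := congrArg star hv'
    rw [star_mulVec] at this
    have hH : (Aᵀ.map (algebraMap ℝ ℂ))ᴴ = B := by
      ext i j
      simp [hB, conjTranspose_apply, Complex.conj_ofReal]
    rw [hH] at this
    rw [this]
    rw [star_smul]
    simp
  set c := star v ⬝ᵥ ((P.map (algebraMap ℝ ℂ)) *ᵥ v) with hc
  set q := star v ⬝ᵥ ((Q.map (algebraMap ℝ ℂ)) *ᵥ v) with hq
  -- evaluate the quadratic form of the Lyapunov expression
  have hterm1 : star v ⬝ᵥ ((B * P.map (algebraMap ℝ ℂ)) *ᵥ v) = μ * c := by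
    rw [← Matrix.mulVec_mulVec, dotProduct_mulVec, hconj, smul_dotProduct,
      smul_eq_mul]
  have hterm2 : star v ⬝ᵥ ((P.map (algebraMap ℝ ℂ) * Aᵀ.map (algebraMap ℝ ℂ)) *ᵥ v)
      = (starRingEnd ℂ μ) * c := by
    rw [← Matrix.mulVec_mulVec, hv', Matrix.mulVec_smul, dotProduct_smul, hc, smul_eq_mul]
  have hSmap : ((-(A * P + P * Aᵀ + Q)).map (algebraMap ℝ ℂ))
      = -(B * P.map (algebraMap ℝ ℂ) + P.map (algebraMap ℝ ℂ) * Aᵀ.map (algebraMap ℝ ℂ)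
          + Q.map (algebraMap ℝ ℂ)) := by
    simp only [hB, ← RingHom.mapMatrix_apply, map_neg, map_add, _root_.map_mul]
  have hSval : star v ⬝ᵥ (((-(A * P + P * Aᵀ + Q)).map (algebraMap ℝ ℂ)) *ᵥ v)
      = -((μ + starRingEnd ℂ μ) * c + q) := by
    rw [hSmap, Matrix.neg_mulVec, dotProduct_neg, Matrix.add_mulVec, Matrix.add_mulVec,
      dotProduct_add, dotProduct_add, hterm1, hterm2]
    ring
  -- positivity facts
  have hcpos : 0 < c.re := quad_re_pos hP hv0
  have hqpos : 0 < q.re := quad_re_pos hQ hv0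
  have hS : 0 ≤ (star v ⬝ᵥ (((-(A * P + P * Aᵀ + Q)).map (algebraMap ℝ ℂ)) *ᵥ v)).re := by
    rw [quad_re_eq]
    have h1 := h.dotProduct_mulVec_nonneg (fun i => (v i).re)
    have h2 := h.dotProduct_mulVec_nonneg (fun i => (v i).im)
    simp only [star_trivial] at h1 h2
    linarith
  rw [hSval] at hS
  have hre : ((μ + starRingEnd ℂ μ) * c).re = 2 * μ.re * c.re := by
    rw [Complex.add_conj]
    simp [Complex.mul_re]
  simp only [Complex.neg_re, Complex.add_re, hre] at hS
  nlinarith
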